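/- The interior Abelian integral I₁ is an affine function of h vanishing at the critical value h = −1/4: for every h ∈ (−1/4, 0), I₁(h) = (√2·π/4)·(4h + 1). -/

import Mathlib

open MeasureTheory

/-- Left endpoint `x₁(h) = √(1 − √(1+4h))` of the interior oval of the Duffing Hamiltonian
`H(x,y) = y²/2 − x²/2 + x⁴/4`. -/
noncomputable def x1 (h : ℝ) : ℝ := Real.sqrt (1 - Real.sqrt (1 + 4*h))

/-- Right endpoint `x₂(h) = √(1 + √(1+4h))` of the interior oval. -/
noncomputable def x2 (h : ℝ) : ℝ := Real.sqrt (1 + Real.sqrt (1 + 4*h))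

/-- The interior Abelian integrals `I_i(h) = 2∫_{x₁(h)}^{x₂(h)} xⁱ √(2h + x² − x⁴/2) dx`. -/
noncomputable def Iint (i : ℕ) (h : ℝ) : ℝ :=
  2 * ∫ x in x1 h..x2 h, x ^ i * Real.sqrt (2*h + x^2 - x^4/2)

theorem I1_affine_interior (h : ℝ) (hh : h ∈ Set.Ioo (-(1:ℝ)/4) 0) :
    Iint 1 h = (Real.sqrt 2 * Real.pi / 4) * (4*h + 1) := by
  obtain ⟨hl, hr⟩ := hh
  set s : ℝ := Real.sqrt (1 + 4*h) with hs
  have hs0 : 0 < s := Real.sqrt_pos.mpr (by linarith)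
  have hs2 : s^2 = 1 + 4*h := Real.sq_sqrt (by linarith)
  have hs1 : s < 1 := by nlinarith
  have h2pos : (0:ℝ) < Real.sqrt 2 := Real.sqrt_pos.mpr (by norm_num)
  have hx1 : (x1 h)^2 = 1 - s := Real.sq_sqrt (by linarith)
  have hx2 : (x2 h)^2 = 1 + s := Real.sq_sqrt (by linarith)
  set f : ℝ → ℝ := fun x => (x^2 - 1)/s with hf
  set f' : ℝ → ℝ := fun x => 2*x/s with hf'
  have hderiv : ∀ x ∈ Set.uIcc (x1 h) (x2 h), HasDerivAt f (f' x) x := by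
    intro x _
    have h1 : HasDerivAt (fun x : ℝ => x^2 - 1) (2*x) x := by
      simpa using ((hasDerivAt_pow 2 x).sub_const 1)
    simpa [hf, hf', div_eq_mul_inv] using h1.div_const s
  have hcont : ContinuousOn f' (Set.uIcc (x1 h) (x2 h)) := by
    apply Continuous.continuousOn; fun_prop
  have hg : Continuous (fun u : ℝ => Real.sqrt (1 - u^2)) := by fun_prop
  have hfx1 : f (x1 h) = -1 := by
    simp only [hf, hx1]; field_simp; ring
  have hfx2 : f (x2 h) = 1 := by
    simp only [hf, hx2]; field_simp; ring
  have key : ∀ x : ℝ, x ^ 1 * Real.sqrt (2*h + x^2 - x^4/2)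
      = (s^2/(2*Real.sqrt 2)) * (f' x * Real.sqrt (1 - (f x)^2)) := by
    intro x
    have e1 : 2*h + x^2 - x^4/2 = (s^2/2) * (1 - (f x)^2) := by
      simp only [hf]
      field_simp
      nlinarith [hs2]
    rw [pow_one, e1, Real.sqrt_mul (by positivity),
      Real.sqrt_div (by positivity : (0:ℝ) ≤ s^2), Real.sqrt_sq hs0.le]
    simp only [hf']
    field_simp
  have hint : (∫ x in x1 h..x2 h, x ^ 1 * Real.sqrt (2*h + x^2 - x^4/2))
      = (s^2/(2*Real.sqrt 2)) * (Real.pi / 2) := by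
    rw [intervalIntegral.integral_congr (g := fun x =>
        (s^2/(2*Real.sqrt 2)) * (f' x * Real.sqrt (1 - (f x)^2)))
      (fun x _ => key x)]
    rw [intervalIntegral.integral_const_mul]
    have := intervalIntegral.integral_comp_smul_deriv hderiv hcont hg
    simp only [Function.comp, smul_eq_mul] at this
    rw [this, hfx1, hfx2, integral_sqrt_one_sub_sq]
  have hs2' : Real.sqrt 2 * Real.sqrt 2 = 2 := Real.mul_self_sqrt (by norm_num)
  rw [Iint, hint, hs2]
  field_simp
  linear_combination (-8*h - 2)*hs2'
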